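/- For all real h and finite r, Owen's T function satisfies T(h,r) = (r/(2π(1+r²))) Σ_{k=0}^∞ ((2k)!!/(2k+1)!!) Q(k+1, q) (r²/(1+r²))^k, where q = (1+r²)h²/2. -/

import Mathlib

open Real MeasureTheory

/-- Owen's T function. -/
noncomputable def OwenT (h r : ℝ) : ℝ :=
  (1 / (2 * Real.pi)) * ∫ x in (0:ℝ)..r, Real.exp (-h ^ 2 * (1 + x ^ 2) / 2) / (1 + x ^ 2)

/-- Upper regularized incomplete gamma function Q(a,x) = Γ(a,x)/Γ(a). -/
noncomputable def regGammaQ (a x : ℝ) : ℝ :=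
  (∫ t in Set.Ioi x, t ^ (a - 1) * Real.exp (-t)) / Real.Gamma a

/-- (2k)!! = 2^k k! -/
noncomputable def evenDF (k : ℕ) : ℝ := 2 ^ k * k.factorial

/-- (2k+1)!! = (2k+1)!/(2^k k!) -/
noncomputable def oddDF (k : ℕ) : ℝ := (2 * k + 1).factorial / (2 ^ k * k.factorial)

open Filter Topology Set

/-!
Since `e^{-a(1+x²)}/(1+x²) = ∫_a^∞ e^{-s(1+x²)} ds`, Fubini gives
`2π T(h,r) = ∫_{h²/2}^∞ e^{-s} ∫_0^r e^{-s x²} dx ds`. Differentiating in `r` and telescoping yields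
`∫_0^r e^{-s x²} dx = e^{-s r²} ∑_k 4^k k!/(2k+1)! s^k r^{2k+1}`, with a remainder of size
`(4 s r²)^N / N!`. The terms are nonnegative, so the series can be integrated termwise in `s`, and
`∫_a^∞ s^k e^{-(1+r²)s} ds = k! Q(k+1, (1+r²)a) / (1+r²)^{k+1}` produces the `k`-th term of the
series. Negative `r` follows because `T` is odd in `r`.
-/

noncomputable def gaussCoeff (k : ℕ) : ℝ := 4 ^ k * k.factorial / (2 * k + 1).factorial

lemma gaussCoeff_nonneg (k : ℕ) : 0 ≤ gaussCoeff k := by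
  unfold gaussCoeff; positivity

lemma gaussCoeff_succ (k : ℕ) : (2 * k + 3) * gaussCoeff (k + 1) = 2 * gaussCoeff k := by
  rw [gaussCoeff, gaussCoeff, show 2 * (k + 1) + 1 = 2 * k + 1 + 1 + 1 by ring,
    Nat.factorial_succ (2 * k + 1 + 1), Nat.factorial_succ (2 * k + 1), Nat.factorial_succ k]
  push_cast
  field_simp
  ring

lemma two_mul_add_one_mul_gaussCoeff_le (k : ℕ) :
    (2 * k + 1) * gaussCoeff k ≤ 4 ^ k / k.factorial := by
  have hsq : (k.factorial : ℝ) * k.factorial ≤ (2 * k).factorial := by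
    exact_mod_cast Nat.le_of_dvd (Nat.factorial_pos _)
      (two_mul k ▸ Nat.factorial_mul_factorial_dvd_factorial_add k k)
  have hk : (0 : ℝ) < k.factorial := by positivity
  calc (2 * k + 1) * gaussCoeff k = 4 ^ k * k.factorial / (2 * k).factorial := by
        rw [gaussCoeff, Nat.factorial_succ (2 * k)]
        push_cast
        field_simp
    _ ≤ 4 ^ k * k.factorial / (k.factorial * k.factorial) := by gcongr
    _ = 4 ^ k / k.factorial := by field_simp

section GaussSeries

variable (s : ℝ)

noncomputable def gaussRemainder (k : ℕ) (x : ℝ) : ℝ :=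
  (2 * k + 1) * gaussCoeff k * s ^ k * x ^ (2 * k) * exp (-s * x ^ 2)

lemma hasDerivAt_gaussTerm (k : ℕ) (x : ℝ) :
    HasDerivAt (fun y => gaussCoeff k * s ^ k * y ^ (2 * k + 1) * exp (-s * y ^ 2))
      (gaussRemainder s k x - gaussRemainder s (k + 1) x) x := by
  have hexp : HasDerivAt (fun y => exp (-s * y ^ 2)) (exp (-s * x ^ 2) * (-s * (2 * x))) x := by
    simpa using ((hasDerivAt_pow 2 x).const_mul (-s)).exp
  have h := ((hasDerivAt_pow (2 * k + 1) x).fun_mul hexp).const_mul (gaussCoeff k * s ^ k)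
  simp only [← mul_assoc] at h
  refine h.congr_deriv ?_
  simp only [gaussRemainder, Nat.add_sub_cancel]
  push_cast
  linear_combination (s ^ (k + 1) * x ^ (2 * (k + 1)) * exp (-s * x ^ 2)) * gaussCoeff_succ k

lemma gaussRemainder_zero (x : ℝ) : gaussRemainder s 0 x = exp (-s * x ^ 2) := by
  simp [gaussRemainder, gaussCoeff]

lemma sum_range_gaussTerm (r : ℝ) (N : ℕ) :
    ∑ k ∈ Finset.range N, gaussCoeff k * s ^ k * r ^ (2 * k + 1) * exp (-s * r ^ 2) =
      (∫ x in 0..r, exp (-s * x ^ 2)) - ∫ x in 0..r, gaussRemainder s N x := by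
  have hderiv : ∀ x ∈ uIcc 0 r, HasDerivAt
      (fun y => ∑ k ∈ Finset.range N, gaussCoeff k * s ^ k * y ^ (2 * k + 1) * exp (-s * y ^ 2))
      (exp (-s * x ^ 2) - gaussRemainder s N x) x := by
    intro x _
    have h := HasDerivAt.fun_sum fun k (_ : k ∈ Finset.range N) => hasDerivAt_gaussTerm s k x
    rwa [Finset.sum_range_sub' (fun k => gaussRemainder s k x), gaussRemainder_zero] at h
  have hcont : Continuous (gaussRemainder s N) := by unfold gaussRemainder; fun_prop
  have hgauss : Continuous fun x => exp (-s * x ^ 2) := by fun_prop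
  rw [← intervalIntegral.integral_sub (hgauss.intervalIntegrable 0 r)
      (hcont.intervalIntegrable 0 r),
    intervalIntegral.integral_eq_sub_of_hasDerivAt hderiv
      ((hgauss.sub hcont).intervalIntegrable 0 r)]
  simp

variable {s}

lemma norm_gaussRemainder_le (hs : 0 ≤ s) (N : ℕ) {r x : ℝ} (hx : 0 ≤ x) (hxr : x ≤ r) :
    ‖gaussRemainder s N x‖ ≤ (4 * s * r ^ 2) ^ N / N.factorial := by
  have hc := gaussCoeff_nonneg N
  have hexp : exp (-s * x ^ 2) ≤ 1 := exp_le_one_iff.mpr (by nlinarith)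
  rw [norm_of_nonneg (by unfold gaussRemainder; positivity)]
  calc gaussRemainder s N x ≤ (2 * N + 1) * gaussCoeff N * s ^ N * x ^ (2 * N) * 1 := by
        unfold gaussRemainder; gcongr
    _ ≤ 4 ^ N / N.factorial * s ^ N * r ^ (2 * N) * 1 := by
        gcongr
        exact two_mul_add_one_mul_gaussCoeff_le N
    _ = (4 * s * r ^ 2) ^ N / N.factorial := by ring

lemma tendsto_integral_gaussRemainder (hs : 0 ≤ s) {r : ℝ} (hr : 0 ≤ r) :
    Tendsto (fun N => ∫ x in 0..r, gaussRemainder s N x) atTop (𝓝 0) := by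
  have hbound (N : ℕ) :
      ‖∫ x in 0..r, gaussRemainder s N x‖ ≤ (4 * s * r ^ 2) ^ N / N.factorial * |r - 0| :=
    intervalIntegral.norm_integral_le_of_norm_le_const fun x hx => by
      rw [uIoc_of_le hr] at hx
      exact norm_gaussRemainder_le hs N hx.1.le hx.2
  refine squeeze_zero_norm hbound ?_
  simpa using (FloorSemiring.tendsto_pow_div_factorial_atTop (4 * s * r ^ 2)).mul_const |r|

lemma hasSum_gaussTerm (hs : 0 ≤ s) {r : ℝ} (hr : 0 ≤ r) :
    HasSum (fun k => gaussCoeff k * s ^ k * r ^ (2 * k + 1) * exp (-s * r ^ 2))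
      (∫ x in 0..r, exp (-s * x ^ 2)) := by
  rw [hasSum_iff_tendsto_nat_of_nonneg fun k => by have := gaussCoeff_nonneg k; positivity]
  simp_rw [sum_range_gaussTerm]
  simpa using tendsto_const_nhds.sub (tendsto_integral_gaussRemainder hs hr)

end GaussSeries

lemma integral_pow_mul_exp_neg_mul_Ioi (k : ℕ) {b : ℝ} (hb : 0 < b) (a : ℝ) :
    ∫ s in Ioi a, s ^ k * exp (-(b * s)) =
      (∫ t in Ioi (b * a), t ^ k * exp (-t)) / b ^ (k + 1) := by
  have h := integral_comp_mul_left_Ioi (fun t => t ^ k * exp (-t)) a hb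
  simp only [smul_eq_mul, mul_pow, mul_assoc, integral_const_mul] at h
  field_simp at h
  rw [eq_div_iff (by positivity), ← h]
  ring

lemma integral_exp_neg_mul_Ioi {b : ℝ} (hb : 0 < b) (a : ℝ) :
    ∫ s in Ioi a, exp (-(b * s)) = exp (-(b * a)) / b := by
  have h := integral_pow_mul_exp_neg_mul_Ioi 0 hb a
  simp only [pow_zero, one_mul, zero_add, pow_one] at h
  rwa [integral_exp_neg_Ioi] at h

lemma regGammaQ_natCast_add_one (k : ℕ) (q : ℝ) :
    regGammaQ (k + 1) q = (∫ t in Ioi q, t ^ k * exp (-t)) / k.factorial := by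
  simp only [regGammaQ, Gamma_nat_eq_factorial, add_sub_cancel_right, rpow_natCast]

lemma evenDF_div_oddDF (k : ℕ) : evenDF k / oddDF k = k.factorial * gaussCoeff k := by
  rw [evenDF, oddDF, gaussCoeff, show (4 : ℝ) ^ k = 2 ^ k * 2 ^ k by rw [← mul_pow]; norm_num]
  field_simp

noncomputable def owenTerm (r : ℝ) (k : ℕ) (s : ℝ) : ℝ :=
  gaussCoeff k * r ^ (2 * k + 1) * (s ^ k * exp (-((1 + r ^ 2) * s)))

lemma integral_owenTerm (r a : ℝ) (k : ℕ) :
    ∫ s in Ioi a, owenTerm r k s =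
      r / (1 + r ^ 2) * (evenDF k / oddDF k * regGammaQ (k + 1) ((1 + r ^ 2) * a) *
        (r ^ 2 / (1 + r ^ 2)) ^ k) := by
  have hb : 0 < 1 + r ^ 2 := by positivity
  simp only [owenTerm, integral_const_mul, integral_pow_mul_exp_neg_mul_Ioi k hb,
    regGammaQ_natCast_add_one, evenDF_div_oddDF, div_pow]
  field_simp
  ring

lemma hasSum_owenTerm {s r : ℝ} (hs : 0 ≤ s) (hr : 0 ≤ r) :
    HasSum (fun k => owenTerm r k s) (exp (-s) * ∫ x in 0..r, exp (-s * x ^ 2)) := by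
  have hterm : (fun k => owenTerm r k s) =
      fun k => exp (-s) * (gaussCoeff k * s ^ k * r ^ (2 * k + 1) * exp (-s * r ^ 2)) := by
    funext k
    rw [owenTerm, show -((1 + r ^ 2) * s) = -s + -s * r ^ 2 by ring, exp_add]
    ring
  rw [hterm]
  exact (hasSum_gaussTerm hs hr).mul_left (exp (-s))

lemma abs_integral_exp_neg_mul_sq_le {s r : ℝ} (hs : 0 ≤ s) (hr : 0 ≤ r) :
    |∫ x in 0..r, exp (-s * x ^ 2)| ≤ r := by
  have h := intervalIntegral.norm_integral_le_of_norm_le_const (a := 0) (b := r) (C := 1)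
    (f := fun x => exp (-s * x ^ 2)) fun x _ => by
      rw [norm_of_nonneg (exp_pos _).le, exp_le_one_iff]
      nlinarith
  simpa [abs_of_nonneg hr] using h

lemma integrableOn_exp_neg_mul_integral_exp_neg_mul_sq {a r : ℝ} (ha : 0 ≤ a) (hr : 0 ≤ r) :
    IntegrableOn (fun s => exp (-s) * ∫ x in 0..r, exp (-s * x ^ 2)) (Ioi a) := by
  have hdom : IntegrableOn (fun s => exp (-1 * s) * r) (Ioi a) :=
    (exp_neg_integrableOn_Ioi a one_pos).mul_const r
  have hcont : Continuous fun s => exp (-s) * ∫ x in 0..r, exp (-s * x ^ 2) := by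
    refine (continuous_exp.comp continuous_neg).mul ?_
    exact intervalIntegral.continuous_parametric_intervalIntegral_of_continuous' (by fun_prop) _ _
  refine hdom.mono' hcont.aestronglyMeasurable ?_
  filter_upwards [ae_restrict_mem measurableSet_Ioi] with s hs
  rw [norm_mul, norm_of_nonneg (exp_pos _).le, neg_one_mul, norm_eq_abs]
  gcongr
  exact abs_integral_exp_neg_mul_sq_le (ha.trans hs.le) hr

lemma hasSum_integral_owenTerm {a r : ℝ} (ha : 0 ≤ a) (hr : 0 ≤ r) :
    HasSum (fun k => ∫ s in Ioi a, owenTerm r k s)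
      (∫ s in Ioi a, exp (-s) * ∫ x in 0..r, exp (-s * x ^ 2)) := by
  have hsum : ∀ᵐ s ∂volume.restrict (Ioi a),
      HasSum (fun k => owenTerm r k s) (exp (-s) * ∫ x in 0..r, exp (-s * x ^ 2)) := by
    filter_upwards [ae_restrict_mem measurableSet_Ioi] with s hs
    exact hasSum_owenTerm (ha.trans hs.le) hr
  refine hasSum_integral_of_dominated_convergence (owenTerm r)
    (fun k => by unfold owenTerm; fun_prop) (fun k => ?_) (hsum.mono fun s hs => hs.summable)
    ((integrableOn_exp_neg_mul_integral_exp_neg_mul_sq ha hr).congr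
      (hsum.mono fun s hs => hs.tsum_eq.symm)) hsum
  filter_upwards [ae_restrict_mem measurableSet_Ioi] with s hs
  have hs0 : 0 ≤ s := ha.trans hs.le
  have := gaussCoeff_nonneg k
  rw [norm_of_nonneg (by unfold owenTerm; positivity)]

lemma integral_exp_div_one_add_sq_eq {a r : ℝ} (ha : 0 ≤ a) (hr : 0 ≤ r) :
    ∫ x in 0..r, exp (-((1 + x ^ 2) * a)) / (1 + x ^ 2) =
      ∫ s in Ioi a, exp (-s) * ∫ x in 0..r, exp (-s * x ^ 2) := by
  have hint : Integrable (Function.uncurry fun s x : ℝ => exp (-((1 + x ^ 2) * s)))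
      ((volume.restrict (Ioi a)).prod (volume.restrict (Ioc 0 r))) := by
    have hdom : Integrable (fun p : ℝ × ℝ => exp (-1 * p.1) * 1)
        ((volume.restrict (Ioi a)).prod (volume.restrict (Ioc 0 r))) :=
      (exp_neg_integrableOn_Ioi a one_pos).mul_prod (integrable_const 1)
    refine hdom.mono' (by fun_prop : Continuous _).aestronglyMeasurable ?_
    rw [Measure.prod_restrict]
    filter_upwards [ae_restrict_mem (measurableSet_Ioi.prod measurableSet_Ioc)] with p hp
    have hs : 0 ≤ p.1 := ha.trans (le_of_lt hp.1)
    rw [Function.uncurry_apply_pair, norm_of_nonneg (exp_pos _).le, mul_one, exp_le_exp]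
    nlinarith
  calc ∫ x in 0..r, exp (-((1 + x ^ 2) * a)) / (1 + x ^ 2)
      = ∫ x in Ioc 0 r, ∫ s in Ioi a, exp (-((1 + x ^ 2) * s)) := by
        rw [intervalIntegral.integral_of_le hr]
        refine setIntegral_congr_fun measurableSet_Ioc fun x _ => ?_
        rw [integral_exp_neg_mul_Ioi (by positivity)]
    _ = ∫ s in Ioi a, ∫ x in Ioc 0 r, exp (-((1 + x ^ 2) * s)) :=
        (integral_integral_swap hint).symm
    _ = ∫ s in Ioi a, exp (-s) * ∫ x in 0..r, exp (-s * x ^ 2) := by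
        refine setIntegral_congr_fun measurableSet_Ioi fun s _ => ?_
        rw [intervalIntegral.integral_of_le hr, ← integral_const_mul]
        refine setIntegral_congr_fun measurableSet_Ioc fun x _ => ?_
        rw [← exp_add]
        ring_nf

lemma OwenT_neg (h r : ℝ) : OwenT h (-r) = -OwenT h r := by
  have heven := intervalIntegral.integral_comp_neg (a := 0) (b := r)
    fun x => exp (-h ^ 2 * (1 + x ^ 2) / 2) / (1 + x ^ 2)
  simp only [neg_sq, neg_zero] at heven
  rw [OwenT, OwenT, intervalIntegral.integral_symm (-r) 0, ← heven]
  ring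

theorem OwenT_series_Q (h r : ℝ) :
    OwenT h r =
      (r / (2 * Real.pi * (1 + r ^ 2))) *
        ∑' k : ℕ, (evenDF k / oddDF k) *
          regGammaQ (k + 1) ((1 + r ^ 2) * h ^ 2 / 2) * (r ^ 2 / (1 + r ^ 2)) ^ k := by
  wlog hr : 0 ≤ r generalizing r
  · have hneg := this (-r) (by linarith)
    rw [OwenT_neg, neg_sq] at hneg
    linear_combination -hneg
  have ha : 0 ≤ h ^ 2 / 2 := by positivity
  have hOwenT : OwenT h r =
      1 / (2 * π) * ∫ s in Ioi (h ^ 2 / 2), exp (-s) * ∫ x in 0..r, exp (-s * x ^ 2) := by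
    rw [← integral_exp_div_one_add_sq_eq ha hr, OwenT]
    ring_nf
  rw [hOwenT, ← (hasSum_integral_owenTerm ha hr).tsum_eq]
  simp_rw [integral_owenTerm, tsum_mul_left]
  field_simp
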